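/- arXiv:1710.05778 — 5 statements merged into one kernel-verified Lean document; each statement's English description precedes it below -/
import Mathlib

section
/- Let P : ℝ^m → [0, ∞] be a nonnegative proper closed function, μ > 0, A : ℝ^n → ℝ^m a linear map with adjoint A^*, and define D_{μ,P}(u) := sup_{y ∈ dom P} { (1/μ)⟨u, y⟩ − (1/(2μ))‖y‖² − P(y) }. For any x ∈ ℝ^n and any y* ∈ prox_{μP}(Ax), the vector (1/μ) A^* y* is a subgradient (in the sense of convex analysis) of the convex function x ↦ D_{μ,P}(Ax) at x, i.e., D_{μ,P}(Av) − D_{μ,P}(Ax) ≥ (1/μ)⟨A^* y*, v − x⟩ for all v ∈ ℝ^n. -/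
open Filter Topology

/-- The proximal mapping of `μ P` at `u`. -/
def proxSet {d : ℕ} (h : EuclideanSpace ℝ (Fin d) → EReal) (lam : ℝ)
    (x : EuclideanSpace ℝ (Fin d)) : Set (EuclideanSpace ℝ (Fin d)) :=
  {z | ∀ y, (((1 / (2 * lam)) * ‖x - z‖ ^ 2 : ℝ) : EReal) + h z ≤
      (((1 / (2 * lam)) * ‖x - y‖ ^ 2 : ℝ) : EReal) + h y}

/-- `D_{μ,P}(u) := sup_{y ∈ dom P} { (1/μ)⟨u, y⟩ − (1/(2μ))‖y‖² − P(y) }`. -/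
noncomputable def Dfun {m : ℕ} (P : EuclideanSpace ℝ (Fin m) → EReal) (μ : ℝ)
    (u : EuclideanSpace ℝ (Fin m)) : EReal :=
  ⨆ y, ⨆ (_ : P y ≠ ⊤),
    (((1 / μ) * (inner ℝ u y : ℝ) - (1 / (2 * μ)) * ‖y‖ ^ 2 : ℝ) : EReal) - P y

/-!
Expanding the square,
`(1/(2μ))‖u - y‖² + P y = ‖u‖²/(2μ) - ((1/μ)⟪u, y⟫ - (1/(2μ))‖y‖² - P y)`,
so a point `y*` of `prox_{μP}(u)` attains the supremum defining `D_{μ,P}(u)`. Testing the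
supremum defining `D_{μ,P}(w)` at the same `y*` gives
`D_{μ,P}(w) ≥ D_{μ,P}(u) + (1/μ)⟪w - u, y*⟫`; for `u = A x`, `w = A v` the adjoint
turns `⟪A v - A x, y*⟫` into `⟪A^* y*, v - x⟫`.
-/

noncomputable def dfunObjective {E : Type*} [NormedAddCommGroup E] [InnerProductSpace ℝ E]
    (μ : ℝ) (u y : E) : ℝ :=
  (1 / μ) * inner ℝ u y - (1 / (2 * μ)) * ‖y‖ ^ 2

section Objective

variable {E : Type*} [NormedAddCommGroup E] [InnerProductSpace ℝ E]

theorem prox_cost_eq_sub_dfunObjective (μ : ℝ) (u y : E) :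
    (1 / (2 * μ)) * ‖u - y‖ ^ 2 = (1 / (2 * μ)) * ‖u‖ ^ 2 - dfunObjective μ u y := by
  rw [dfunObjective, norm_sub_sq_real]
  ring

theorem dfunObjective_sub_dfunObjective (μ : ℝ) (u w y : E) :
    dfunObjective μ w y - dfunObjective μ u y = (1 / μ) * inner ℝ (w - u) y := by
  rw [dfunObjective, dfunObjective, inner_sub_left]
  ring

end Objective

section Prox

variable {d : ℕ} {P : EuclideanSpace ℝ (Fin d) → EReal} {μ : ℝ}
  {u z : EuclideanSpace ℝ (Fin d)}

theorem dfunObjective_sub_le_Dfun {y : EuclideanSpace ℝ (Fin d)} (hy : P y ≠ ⊤) :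
    (dfunObjective μ u y : EReal) - P y ≤ Dfun P μ u :=
  le_iSup₂_of_le (f := fun y (_ : P y ≠ ⊤) => (dfunObjective μ u y : EReal) - P y)
    y hy le_rfl

theorem apply_ne_top_of_mem_proxSet (hbot : ∀ y, P y ≠ ⊥) (hproper : ∃ y, P y ≠ ⊤)
    (hz : z ∈ proxSet P μ u) : P z ≠ ⊤ := by
  obtain ⟨y, hy⟩ := hproper
  intro htop
  have hzy := hz y
  rw [htop, EReal.coe_add_top, top_le_iff, ← EReal.coe_toReal hy (hbot y)] at hzy
  exact EReal.coe_ne_top _ (by exact_mod_cast hzy)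

theorem dfunObjective_sub_le_of_mem_proxSet (hbot : ∀ y, P y ≠ ⊥) (hz : z ∈ proxSet P μ u)
    (hPz : P z ≠ ⊤) (y : EuclideanSpace ℝ (Fin d)) :
    (dfunObjective μ u y : EReal) - P y ≤ (dfunObjective μ u z : EReal) - P z := by
  rcases eq_or_ne (P y) ⊤ with hPy | hPy
  · rw [hPy, EReal.sub_top]
    exact bot_le
  obtain ⟨r, hr⟩ : ∃ r : ℝ, P z = r := ⟨_, (EReal.coe_toReal hPz (hbot z)).symm⟩
  obtain ⟨s, hs⟩ : ∃ s : ℝ, P y = s := ⟨_, (EReal.coe_toReal hPy (hbot y)).symm⟩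
  have hzy := hz y
  rw [prox_cost_eq_sub_dfunObjective, prox_cost_eq_sub_dfunObjective, hr, hs] at hzy
  rw [hr, hs]
  norm_cast at hzy ⊢
  linarith

theorem Dfun_eq_of_mem_proxSet (hbot : ∀ y, P y ≠ ⊥) (hz : z ∈ proxSet P μ u)
    (hPz : P z ≠ ⊤) : Dfun P μ u = (dfunObjective μ u z : EReal) - P z :=
  le_antisymm (iSup₂_le fun y _ => dfunObjective_sub_le_of_mem_proxSet hbot hz hPz y)
    (dfunObjective_sub_le_Dfun hPz)

theorem inner_le_Dfun_sub_of_mem_proxSet (hbot : ∀ y, P y ≠ ⊥) (hproper : ∃ y, P y ≠ ⊤)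
    (hz : z ∈ proxSet P μ u) (w : EuclideanSpace ℝ (Fin d)) :
    (((1 / μ) * inner ℝ (w - u) z : ℝ) : EReal) ≤ Dfun P μ w - Dfun P μ u := by
  have hPz := apply_ne_top_of_mem_proxSet hbot hproper hz
  have hDw : (dfunObjective μ w z : EReal) - P z ≤ Dfun P μ w := dfunObjective_sub_le_Dfun hPz
  obtain ⟨r, hr⟩ : ∃ r : ℝ, P z = r := ⟨_, (EReal.coe_toReal hPz (hbot z)).symm⟩
  rw [Dfun_eq_of_mem_proxSet hbot hz hPz, hr, ← EReal.coe_sub,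
    EReal.le_sub_iff_add_le (.inl (EReal.coe_ne_bot _)) (.inl (EReal.coe_ne_top _)),
    ← EReal.coe_add]
  rw [hr, ← EReal.coe_sub] at hDw
  refine le_trans (EReal.coe_le_coe_iff.mpr (le_of_eq ?_)) hDw
  linarith [dfunObjective_sub_dfunObjective μ u w z]

end Prox

theorem prox_subgradient_of_Dfun_comp_general {n m : ℕ}
    (P : EuclideanSpace ℝ (Fin m) → EReal)
    (hnn : ∀ y, 0 ≤ P y) (hproper : ∃ y, P y ≠ ⊤)
    (μ : ℝ)
    (A : EuclideanSpace ℝ (Fin n) →L[ℝ] EuclideanSpace ℝ (Fin m))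
    (x : EuclideanSpace ℝ (Fin n)) (ystar : EuclideanSpace ℝ (Fin m))
    (hystar : ystar ∈ proxSet P μ (A x)) :
    ∀ v, (((1 / μ) * (inner ℝ (ContinuousLinearMap.adjoint A ystar) (v - x) : ℝ) : ℝ) : EReal) ≤
      Dfun P μ (A v) - Dfun P μ (A x) := by
  intro v
  have hbot : ∀ y, P y ≠ ⊥ := fun y => ne_bot_of_le_ne_bot EReal.zero_ne_bot (hnn y)
  rw [ContinuousLinearMap.adjoint_inner_left, map_sub, real_inner_comm]
  exact inner_le_Dfun_sub_of_mem_proxSet hbot hproper hystar (A v)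

/-- Let `P : ℝ^m → [0, ∞]` be a nonnegative proper closed function, `μ > 0`,
`A : ℝ^n → ℝ^m` linear with adjoint `A^*`.  For any `x ∈ ℝ^n` and any
`y* ∈ prox_{μP}(Ax)`, the vector `(1/μ) A^* y*` is a convex-analysis
subgradient of `x ↦ D_{μ,P}(Ax)` at `x`, i.e.
`D_{μ,P}(Av) − D_{μ,P}(Ax) ≥ (1/μ)⟨A^* y*, v − x⟩` for all `v`. -/
theorem prox_subgradient_of_Dfun_comp {n m : ℕ}
    (P : EuclideanSpace ℝ (Fin m) → EReal)
    (hnn : ∀ y, 0 ≤ P y) (hproper : ∃ y, P y ≠ ⊤)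
    (hclosed : LowerSemicontinuous P) (μ : ℝ) (hμ : 0 < μ)
    (A : EuclideanSpace ℝ (Fin n) →L[ℝ] EuclideanSpace ℝ (Fin m))
    (x : EuclideanSpace ℝ (Fin n)) (ystar : EuclideanSpace ℝ (Fin m))
    (hystar : ystar ∈ proxSet P μ (A x)) :
    ∀ v, (((1 / μ) * (inner ℝ (ContinuousLinearMap.adjoint A ystar) (v - x) : ℝ) : ℝ) : EReal) ≤
      Dfun P μ (A v) - Dfun P μ (A x) :=
  prox_subgradient_of_Dfun_comp_general P hnn hproper μ A x ystar hystar
end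

section
/- Let f : ℝ^n → ℝ be continuously differentiable, P_0 : ℝ^n → [0, ∞] proper closed and continuous on its domain, and for i = 1,…,m let A_i : ℝ^n → ℝ^{n_i} be linear with adjoint A_i^*, and P_i : ℝ^{n_i} → [0, ∞] proper closed with closed domain and continuous on its domain. Let x* satisfy x* ∈ dom P_0 and A_i x* ∈ dom P_i for all i. Suppose there are sequences ε_t > 0 with ε_t → 0, λ_{i,t} > 0 with λ_{i,t} → 0, points x^t → x* and y^t → x*, vectors ξ^t with ‖ξ^t‖ ≤ ε_t, η^t ∈ ∂P_0(y^t) (limiting subdifferential), and ζ_i^t ∈ prox_{λ_{i,t} P_i}(A_i x^t) for each i, such that ξ^t = ∇f(x^t) + η^t + Σ_{i=1}^m (1/λ_{i,t}) A_i^*(A_i x^t − ζ_i^t) for every t. Assume the constraint qualification: whenever y_0 + Σ_{i=1}^m A_i^* y_i = 0 with y_0 ∈ ∂^∞P_0(x*) and y_i ∈ ∂^∞P_i(A_i x*) for i = 1,…,m, then y_i = 0 for all i = 0,…,m. Then x* is a stationary point, i.e., 0 ∈ ∇f(x*) + ∂P_0(x*) + Σ_{i=1}^m A_i^* ∂P_i(A_i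 x*). -/
open Filter Topology

/-- The Fréchet (regular) subdifferential of `h` at `w`. -/
def frechetSubdiff {d : ℕ} (h : EuclideanSpace ℝ (Fin d) → EReal)
    (w : EuclideanSpace ℝ (Fin d)) : Set (EuclideanSpace ℝ (Fin d)) :=
  {u | h w ≠ ⊤ ∧ 0 ≤ Filter.liminf
      (fun y => (h y - h w - ((inner ℝ u (y - w) : ℝ) : EReal)) / ((‖y - w‖ : ℝ) : EReal))
      (𝓝[≠] w)}

/-- The limiting subdifferential of `h` at `x`. -/
def limitingSubdiff {d : ℕ} (h : EuclideanSpace ℝ (Fin d) → EReal)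
    (x : EuclideanSpace ℝ (Fin d)) : Set (EuclideanSpace ℝ (Fin d)) :=
  {u | h x ≠ ⊤ ∧ ∃ xs us : ℕ → EuclideanSpace ℝ (Fin d),
      Tendsto xs atTop (𝓝 x) ∧
      Tendsto (fun t => h (xs t)) atTop (𝓝 (h x)) ∧
      Tendsto us atTop (𝓝 u) ∧
      ∀ t, us t ∈ frechetSubdiff h (xs t)}

/-- The horizon subdifferential of `h` at `x`. -/
def horizonSubdiff {d : ℕ} (h : EuclideanSpace ℝ (Fin d) → EReal)
    (x : EuclideanSpace ℝ (Fin d)) : Set (EuclideanSpace ℝ (Fin d)) :=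
  {u | h x ≠ ⊤ ∧ ∃ (α : ℕ → ℝ) (xs us : ℕ → EuclideanSpace ℝ (Fin d)),
      (∀ t, 0 < α t) ∧ Tendsto α atTop (𝓝 0) ∧
      Tendsto xs atTop (𝓝 x) ∧
      Tendsto (fun t => h (xs t)) atTop (𝓝 (h x)) ∧
      Tendsto (fun t => α t • us t) atTop (𝓝 u) ∧
      ∀ t, us t ∈ frechetSubdiff h (xs t)}

/-!
Optimality of `ζ_i^t` in the proximal problem makes
`u_i^t = (A_i x^t - ζ_i^t) / λ_{i,t}` a Fréchet subgradient of `P_i` at `ζ_i^t`, and `λ_{i,t} → 0`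
forces `ζ_i^t → A_i x*`; likewise each `η^t` can be replaced by a Fréchet subgradient at a nearby
point. Continuity of `P_0`, `P_i` on their domains makes these base points converge with convergent
function values, so limits of the multipliers `(η^t, u^t)` are limiting subgradients at `x*`, and
limits of their normalizations are horizon subgradients. If the multipliers were unbounded, a
normalized subsequence would converge to a unit vector `(y_0, y)` with `y_0 + Σ A_i^* y_i = 0`,
contradicting the qualification; hence a subsequence converges, and passing to the limit in the
optimality equation gives stationarity.
-/

section Frechet

variable {d : ℕ} {h : EuclideanSpace ℝ (Fin d) → EReal} {z u : EuclideanSpace ℝ (Fin d)}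

theorem mem_frechetSubdiff_of_neg_sq_le (hz : h z ≠ ⊤) (C : ℝ)
    (hC : ∀ y, ((-C * ‖y - z‖ ^ 2 : ℝ) : EReal) ≤
      h y - h z - ((inner ℝ u (y - z) : ℝ) : EReal)) :
    u ∈ frechetSubdiff h z := by
  refine ⟨hz, ?_⟩
  rcases (𝓝[≠] z).eq_or_neBot with hbot | hne
  · simp [hbot]
  have hlim : Tendsto (fun y => ((-C * ‖y - z‖ : ℝ) : EReal)) (𝓝[≠] z) (𝓝 0) := by
    have hcont : Continuous fun y => ((-C * ‖y - z‖ : ℝ) : EReal) :=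
      continuous_coe_real_ereal.comp (by fun_prop)
    simpa using (hcont.tendsto z).mono_left nhdsWithin_le_nhds
  rw [← hlim.liminf_eq]
  refine liminf_le_liminf (eventually_nhdsWithin_of_forall fun y hy => ?_)
  have hpos : 0 < ‖y - z‖ := norm_pos_iff.2 (sub_ne_zero.2 hy)
  calc ((-C * ‖y - z‖ : ℝ) : EReal)
      = ((-C * ‖y - z‖ ^ 2 : ℝ) : EReal) / ((‖y - z‖ : ℝ) : EReal) := by
        rw [← EReal.coe_div]
        congr 1
        field_simp
    _ ≤ _ := EReal.div_le_div_right_of_nonneg (by exact_mod_cast hpos.le) (hC y)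

end Frechet

section Prox

variable {d : ℕ} {h : EuclideanSpace ℝ (Fin d) → EReal} {lam : ℝ}
  {x z w : EuclideanSpace ℝ (Fin d)}

theorem ne_top_of_mem_proxSet (hz : z ∈ proxSet h lam x) (hw : h w ≠ ⊤) : h z ≠ ⊤ := by
  intro htop
  have hzw := hz w
  rw [htop, EReal.coe_add_top, top_le_iff] at hzw
  exact (EReal.add_lt_top (EReal.coe_ne_top _) hw).ne hzw

theorem toReal_objective_le_of_mem_proxSet (hz : z ∈ proxSet h lam x) (hzb : h z ≠ ⊥)
    (hwb : h w ≠ ⊥) (hw : h w ≠ ⊤) :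
    1 / (2 * lam) * ‖x - z‖ ^ 2 + (h z).toReal ≤ 1 / (2 * lam) * ‖x - w‖ ^ 2 + (h w).toReal := by
  have hzw := hz w
  rw [← EReal.coe_toReal (ne_top_of_mem_proxSet hz hw) hzb, ← EReal.coe_toReal hw hwb] at hzw
  exact_mod_cast hzw

theorem neg_sq_le_of_mem_proxSet (hbot : ∀ y, h y ≠ ⊥) (hz : z ∈ proxSet h lam x)
    (hzt : h z ≠ ⊤) (y : EuclideanSpace ℝ (Fin d)) :
    ((-(1 / (2 * lam)) * ‖y - z‖ ^ 2 : ℝ) : EReal) ≤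
      h y - h z - ((inner ℝ ((1 / lam) • (x - z)) (y - z) : ℝ) : EReal) := by
  by_cases hyt : h y = ⊤
  · rw [hyt, ← EReal.coe_toReal hzt (hbot z), EReal.top_sub_coe, EReal.top_sub_coe]
    exact le_top
  have hprox := toReal_objective_le_of_mem_proxSet hz (hbot z) (hbot y) hyt
  rw [← EReal.coe_toReal hzt (hbot z), ← EReal.coe_toReal hyt (hbot y), ← EReal.coe_sub,
    ← EReal.coe_sub, EReal.coe_le_coe_iff, real_inner_smul_left]
  have hxy : ‖x - y‖ ^ 2 = ‖x - z‖ ^ 2 - 2 * inner ℝ (x - z) (y - z) + ‖y - z‖ ^ 2 := by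
    rw [← sub_sub_sub_cancel_right x y z, norm_sub_sq_real]
  have hinv : 1 / lam = 2 * (1 / (2 * lam)) := by ring
  rw [hxy] at hprox
  rw [hinv]
  linear_combination hprox

theorem smul_sub_mem_frechetSubdiff_of_mem_proxSet (hbot : ∀ y, h y ≠ ⊥)
    (hz : z ∈ proxSet h lam x) (hzt : h z ≠ ⊤) :
    (1 / lam) • (x - z) ∈ frechetSubdiff h z :=
  mem_frechetSubdiff_of_neg_sq_le hzt _ (neg_sq_le_of_mem_proxSet hbot hz hzt)

theorem norm_sub_sq_le_of_mem_proxSet (hnn : ∀ y, 0 ≤ h y) (hlam : 0 < lam)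
    (hz : z ∈ proxSet h lam x) (hw : h w ≠ ⊤) :
    ‖x - z‖ ^ 2 ≤ ‖x - w‖ ^ 2 + 2 * lam * (h w).toReal := by
  have hbot : ∀ y, h y ≠ ⊥ := fun y => ne_bot_of_le_ne_bot EReal.zero_ne_bot (hnn y)
  have hprox := toReal_objective_le_of_mem_proxSet hz (hbot z) (hbot w) hw
  have hz0 : 0 ≤ (h z).toReal := EReal.toReal_nonneg (hnn z)
  calc ‖x - z‖ ^ 2 ≤ ‖x - z‖ ^ 2 + 2 * lam * (h z).toReal :=
        le_add_of_nonneg_right (by positivity)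
    _ = 2 * lam * (1 / (2 * lam) * ‖x - z‖ ^ 2 + (h z).toReal) := by field_simp
    _ ≤ 2 * lam * (1 / (2 * lam) * ‖x - w‖ ^ 2 + (h w).toReal) := by gcongr
    _ = ‖x - w‖ ^ 2 + 2 * lam * (h w).toReal := by field_simp

theorem tendsto_of_mem_proxSet (hnn : ∀ y, 0 ≤ h y) (hw : h w ≠ ⊤)
    {lam : ℕ → ℝ} (hlampos : ∀ t, 0 < lam t) (hlam : Tendsto lam atTop (𝓝 0))
    {x z : ℕ → EuclideanSpace ℝ (Fin d)} (hx : Tendsto x atTop (𝓝 w))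
    (hz : ∀ t, z t ∈ proxSet h (lam t) (x t)) :
    Tendsto z atTop (𝓝 w) := by
  have hbound : Tendsto (fun t => ‖x t - w‖ ^ 2 + 2 * lam t * (h w).toReal) atTop (𝓝 0) := by
    simpa using ((tendsto_iff_norm_sub_tendsto_zero.1 hx).pow 2).add
      ((hlam.const_mul 2).mul_const (h w).toReal)
  have hsq : Tendsto (fun t => ‖x t - z t‖ ^ 2) atTop (𝓝 0) :=
    squeeze_zero (fun t => by positivity)
      (fun t => norm_sub_sq_le_of_mem_proxSet hnn (hlampos t) (hz t) hw) hbound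
  refine hx.congr_dist ?_
  simpa [dist_eq_norm, Real.sqrt_sq (norm_nonneg _)] using hsq.sqrt

end Prox

section Attentive

variable {d : ℕ} {h : EuclideanSpace ℝ (Fin d) → EReal} {x₀ : EuclideanSpace ℝ (Fin d)}
  {p v : ℕ → EuclideanSpace ℝ (Fin d)}

/-- `p t → x₀` `h`-attentively (in the sense of Rockafellar–Wets), with Fréchet subgradients
`v t` at `p t`: the sequences behind `limitingSubdiff` and `horizonSubdiff`. -/
structure IsAttentiveFrechetSeq (h : EuclideanSpace ℝ (Fin d) → EReal)
    (x₀ : EuclideanSpace ℝ (Fin d)) (p v : ℕ → EuclideanSpace ℝ (Fin d)) : Prop where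
  tendsto : Tendsto p atTop (𝓝 x₀)
  tendsto_apply : Tendsto (fun t => h (p t)) atTop (𝓝 (h x₀))
  mem : ∀ t, v t ∈ frechetSubdiff h (p t)

namespace IsAttentiveFrechetSeq

theorem of_continuousWithinAt (hc : ContinuousWithinAt h {y | h y ≠ ⊤} x₀)
    (hp : Tendsto p atTop (𝓝 x₀)) (hv : ∀ t, v t ∈ frechetSubdiff h (p t)) :
    IsAttentiveFrechetSeq h x₀ p v :=
  ⟨hp, hc.tendsto.comp (tendsto_nhdsWithin_iff.2 ⟨hp, .of_forall fun t => (hv t).1⟩), hv⟩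

theorem comp (H : IsAttentiveFrechetSeq h x₀ p v) {φ : ℕ → ℕ} (hφ : Tendsto φ atTop atTop) :
    IsAttentiveFrechetSeq h x₀ (p ∘ φ) (v ∘ φ) :=
  ⟨H.tendsto.comp hφ, H.tendsto_apply.comp hφ, fun t => H.mem (φ t)⟩

theorem mem_limitingSubdiff (H : IsAttentiveFrechetSeq h x₀ p v) (hx₀ : h x₀ ≠ ⊤)
    {u : EuclideanSpace ℝ (Fin d)} (hv : Tendsto v atTop (𝓝 u)) :
    u ∈ limitingSubdiff h x₀ :=
  ⟨hx₀, p, v, H.tendsto, H.tendsto_apply, hv, H.mem⟩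

theorem mem_horizonSubdiff (H : IsAttentiveFrechetSeq h x₀ p v) (hx₀ : h x₀ ≠ ⊤)
    {α : ℕ → ℝ} (hα : ∀ t, 0 < α t) (hα₀ : Tendsto α atTop (𝓝 0))
    {u : EuclideanSpace ℝ (Fin d)} (hv : Tendsto (fun t => α t • v t) atTop (𝓝 u)) :
    u ∈ horizonSubdiff h x₀ :=
  ⟨hx₀, α, p, v, hα, hα₀, H.tendsto, H.tendsto_apply, hv, H.mem⟩

end IsAttentiveFrechetSeq

theorem exists_frechetSubdiff_near_of_mem_limitingSubdiff {x u : EuclideanSpace ℝ (Fin d)}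
    (hu : u ∈ limitingSubdiff h x) {δ : ℝ} (hδ : 0 < δ) :
    ∃ x' u', u' ∈ frechetSubdiff h x' ∧ dist x' x < δ ∧ dist u' u < δ := by
  obtain ⟨-, xs, us, hxs, -, hus, hmem⟩ := hu
  obtain ⟨t, hxt, hut⟩ := ((hxs.eventually (Metric.ball_mem_nhds x hδ)).and
    (hus.eventually (Metric.ball_mem_nhds u hδ))).exists
  exact ⟨xs t, us t, hmem t, hxt, hut⟩

theorem exists_isAttentiveFrechetSeq_of_mem_limitingSubdiff
    (hc : ContinuousWithinAt h {y | h y ≠ ⊤} x₀) {y η : ℕ → EuclideanSpace ℝ (Fin d)}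
    (hy : Tendsto y atTop (𝓝 x₀)) (hη : ∀ t, η t ∈ limitingSubdiff h (y t)) :
    ∃ p v, IsAttentiveFrechetSeq h x₀ p v ∧ Tendsto (fun t => v t - η t) atTop (𝓝 0) := by
  choose p v hv hp hvη using fun t : ℕ =>
    exists_frechetSubdiff_near_of_mem_limitingSubdiff (hη t)
      (Nat.one_div_pos_of_nat (α := ℝ) (n := t))
  have hδ : Tendsto (fun t : ℕ => 1 / ((t : ℝ) + 1)) atTop (𝓝 0) :=
    tendsto_one_div_add_atTop_nhds_zero_nat
  refine ⟨p, v, .of_continuousWithinAt hc (hy.congr_dist ?_) hv, ?_⟩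
  · exact squeeze_zero (fun _ => dist_nonneg) (fun t => (dist_comm _ _).trans_le (hp t).le) hδ
  · rw [tendsto_zero_iff_norm_tendsto_zero]
    exact squeeze_zero (fun _ => norm_nonneg _)
      (fun t => (dist_eq_norm (v t) (η t)).symm.trans_le (hvη t).le) hδ

theorem isAttentiveFrechetSeq_of_mem_proxSet (hnn : ∀ y, 0 ≤ h y)
    (hc : ContinuousWithinAt h {y | h y ≠ ⊤} x₀) (hx₀ : h x₀ ≠ ⊤)
    {lam : ℕ → ℝ} (hlampos : ∀ t, 0 < lam t) (hlam : Tendsto lam atTop (𝓝 0))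
    {x z : ℕ → EuclideanSpace ℝ (Fin d)} (hx : Tendsto x atTop (𝓝 x₀))
    (hz : ∀ t, z t ∈ proxSet h (lam t) (x t)) :
    IsAttentiveFrechetSeq h x₀ z (fun t => (1 / lam t) • (x t - z t)) :=
  .of_continuousWithinAt hc (tendsto_of_mem_proxSet hnn hx₀ hlampos hlam hx hz) fun t =>
    smul_sub_mem_frechetSubdiff_of_mem_proxSet
      (fun y => ne_bot_of_le_ne_bot EReal.zero_ne_bot (hnn y)) (hz t)
      (ne_top_of_mem_proxSet (hz t) hx₀)

end Attentive

section Subsequence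

variable {F : Type*} [NormedAddCommGroup F] [ProperSpace F] {V : ℕ → F}

theorem exists_strictMono_tendsto_of_frequently_norm_le {R : ℝ}
    (hV : ∃ᶠ t in atTop, ‖V t‖ ≤ R) :
    ∃ a, ∃ φ : ℕ → ℕ, StrictMono φ ∧ Tendsto (V ∘ φ) atTop (𝓝 a) := by
  obtain ⟨ψ, hψ, hψR⟩ := extraction_of_frequently_atTop hV
  obtain ⟨a, -, φ, hφ, hlim⟩ := (isCompact_closedBall (0 : F) R).tendsto_subseq (x := V ∘ ψ)
    fun t => mem_closedBall_zero_iff.2 (hψR t)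
  exact ⟨a, ψ ∘ φ, hψ.comp hφ, hlim⟩

theorem exists_strictMono_tendsto_inv_norm_smul [NormedSpace ℝ F]
    (hV : Tendsto (fun t => ‖V t‖) atTop atTop) :
    ∃ a, ‖a‖ = 1 ∧ ∃ φ : ℕ → ℕ, StrictMono φ ∧ (∀ t, V (φ t) ≠ 0) ∧
      Tendsto (fun t => ‖V (φ t)‖⁻¹ • V (φ t)) atTop (𝓝 a) := by
  obtain ⟨ψ, hψ, hψ0⟩ := extraction_of_eventually_atTop
    ((hV.eventually_gt_atTop 0).mono fun t => norm_pos_iff.1)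
  obtain ⟨a, ha, φ, hφ, hlim⟩ := (isCompact_sphere (0 : F) 1).tendsto_subseq
    (x := fun t => ‖V (ψ t)‖⁻¹ • V (ψ t)) fun t => by
      simpa using norm_smul_inv_norm (𝕜 := ℝ) (hψ0 t)
  exact ⟨a, by simpa using ha, ψ ∘ φ, hψ.comp hφ, fun t => hψ0 (φ t), hlim⟩

end Subsequence

section Qualification

variable {n m : ℕ} {ni : Fin m → ℕ}
  (A : (i : Fin m) → EuclideanSpace ℝ (Fin n) →L[ℝ] EuclideanSpace ℝ (Fin (ni i)))

noncomputable def adjointSum :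
    (EuclideanSpace ℝ (Fin n) × ((i : Fin m) → EuclideanSpace ℝ (Fin (ni i)))) →L[ℝ]
      EuclideanSpace ℝ (Fin n) :=
  .fst ℝ _ _ + ∑ i, (ContinuousLinearMap.adjoint (A i)).comp
    ((ContinuousLinearMap.proj i).comp (.snd ℝ _ _))

@[simp]
theorem adjointSum_apply
    (a : EuclideanSpace ℝ (Fin n) × ((i : Fin m) → EuclideanSpace ℝ (Fin (ni i)))) :
    adjointSum A a = a.1 + ∑ i, ContinuousLinearMap.adjoint (A i) (a.2 i) := by
  simp [adjointSum]

def HorizonQualification (P0 : EuclideanSpace ℝ (Fin n) → EReal)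
    (P : (i : Fin m) → EuclideanSpace ℝ (Fin (ni i)) → EReal)
    (xstar : EuclideanSpace ℝ (Fin n)) : Prop :=
  ∀ (y0 : EuclideanSpace ℝ (Fin n)) (yi : (i : Fin m) → EuclideanSpace ℝ (Fin (ni i))),
    y0 ∈ horizonSubdiff P0 xstar →
    (∀ i, yi i ∈ horizonSubdiff (P i) (A i xstar)) →
    y0 + ∑ i, (ContinuousLinearMap.adjoint (A i)) (yi i) = 0 →
    y0 = 0 ∧ ∀ i, yi i = 0

variable {A} {P0 : EuclideanSpace ℝ (Fin n) → EReal}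
  {P : (i : Fin m) → EuclideanSpace ℝ (Fin (ni i)) → EReal} {xstar : EuclideanSpace ℝ (Fin n)}

theorem not_tendsto_norm_atTop_of_horizonQualification
    (hCQ : HorizonQualification A P0 P xstar)
    (hx0 : P0 xstar ≠ ⊤) (hxi : ∀ i, P i (A i xstar) ≠ ⊤)
    {p v : ℕ → EuclideanSpace ℝ (Fin n)} {q w : (i : Fin m) → ℕ → EuclideanSpace ℝ (Fin (ni i))}
    (H0 : IsAttentiveFrechetSeq P0 xstar p v)
    (Hi : ∀ i, IsAttentiveFrechetSeq (P i) (A i xstar) (q i) (w i))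
    {g : EuclideanSpace ℝ (Fin n)}
    (hg : Tendsto (fun t => adjointSum A (v t, fun i => w i t)) atTop (𝓝 g)) :
    ¬ Tendsto (fun t => ‖(v t, fun i => w i t)‖) atTop atTop := by
  intro hV
  obtain ⟨a, ha, φ, hφ, hV0, hlim⟩ := exists_strictMono_tendsto_inv_norm_smul hV
  set α := fun t => ‖(v (φ t), fun i => w i (φ t))‖⁻¹
  have hα : ∀ t, 0 < α t := fun t => inv_pos.2 (norm_pos_iff.2 (hV0 t))
  have hα₀ : Tendsto α atTop (𝓝 0) := tendsto_inv_atTop_zero.comp (hV.comp hφ.tendsto_atTop)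
  have hLa : adjointSum A a = 0 := by
    refine tendsto_nhds_unique (((adjointSum A).continuous.tendsto a).comp hlim) ?_
    simpa only [Function.comp_def, map_smul, zero_smul] using hα₀.smul (hg.comp hφ.tendsto_atTop)
  obtain ⟨ha1, ha2⟩ := hCQ a.1 a.2
    ((H0.comp hφ.tendsto_atTop).mem_horizonSubdiff hx0 hα hα₀
      ((continuous_fst.tendsto a).comp hlim))
    (fun i => ((Hi i).comp hφ.tendsto_atTop).mem_horizonSubdiff (hxi i) hα hα₀
      (((continuous_apply i).tendsto _).comp ((continuous_snd.tendsto a).comp hlim)))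
    (by simpa using hLa)
  have ha0 : a = 0 := Prod.ext ha1 (funext ha2)
  simp [ha0] at ha

theorem exists_limitingSubdiff_of_tendsto_adjointSum (hCQ : HorizonQualification A P0 P xstar)
    (hx0 : P0 xstar ≠ ⊤) (hxi : ∀ i, P i (A i xstar) ≠ ⊤)
    {p v : ℕ → EuclideanSpace ℝ (Fin n)} {q w : (i : Fin m) → ℕ → EuclideanSpace ℝ (Fin (ni i))}
    (H0 : IsAttentiveFrechetSeq P0 xstar p v)
    (Hi : ∀ i, IsAttentiveFrechetSeq (P i) (A i xstar) (q i) (w i))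
    {g : EuclideanSpace ℝ (Fin n)}
    (hg : Tendsto (fun t => v t + ∑ i, ContinuousLinearMap.adjoint (A i) (w i t)) atTop (𝓝 g)) :
    ∃ η₀ ∈ limitingSubdiff P0 xstar,
      ∃ χ : (i : Fin m) → EuclideanSpace ℝ (Fin (ni i)),
        (∀ i, χ i ∈ limitingSubdiff (P i) (A i xstar)) ∧
        η₀ + ∑ i, ContinuousLinearMap.adjoint (A i) (χ i) = g := by
  have hLV : Tendsto (fun t => adjointSum A (v t, fun i => w i t)) atTop (𝓝 g) := by
    simpa using hg
  have hV := not_tendsto_norm_atTop_of_horizonQualification hCQ hx0 hxi H0 Hi hLV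
  obtain ⟨R, hR⟩ : ∃ R, ∃ᶠ t in atTop, ‖(v t, fun i => w i t)‖ ≤ R := by
    simp only [tendsto_atTop, not_forall, not_eventually, not_le] at hV
    obtain ⟨R, hR⟩ := hV
    exact ⟨R, hR.mono fun t => le_of_lt⟩
  obtain ⟨a, φ, hφ, hlim⟩ := exists_strictMono_tendsto_of_frequently_norm_le hR
  refine ⟨a.1, (H0.comp hφ.tendsto_atTop).mem_limitingSubdiff hx0
      ((continuous_fst.tendsto a).comp hlim), a.2,
    fun i => ((Hi i).comp hφ.tendsto_atTop).mem_limitingSubdiff (hxi i)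
      (((continuous_apply i).tendsto _).comp ((continuous_snd.tendsto a).comp hlim)), ?_⟩
  simpa using tendsto_nhds_unique (((adjointSum A).continuous.tendsto a).comp hlim)
    (hLV.comp hφ.tendsto_atTop)

end Qualification

theorem ContDiff.continuous_gradient {F : Type*} [NormedAddCommGroup F] [InnerProductSpace ℝ F]
    [CompleteSpace F] {f : F → ℝ} (hf : ContDiff ℝ 1 f) : Continuous (gradient f) :=
  (InnerProductSpace.toDual ℝ F).symm.continuous.comp (hf.continuous_fderiv one_ne_zero)

theorem sdcam_accumulation_stationary_general {n m : ℕ} {ni : Fin m → ℕ}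
    (f : EuclideanSpace ℝ (Fin n) → ℝ) (hf : ContDiff ℝ 1 f)
    (P0 : EuclideanSpace ℝ (Fin n) → EReal)
    (hP0cont : ContinuousOn P0 {x | P0 x ≠ ⊤})
    (A : (i : Fin m) → EuclideanSpace ℝ (Fin n) →L[ℝ] EuclideanSpace ℝ (Fin (ni i)))
    (P : (i : Fin m) → EuclideanSpace ℝ (Fin (ni i)) → EReal)
    (hPnn : ∀ i y, 0 ≤ P i y)
    (hPcont : ∀ i, ContinuousOn (P i) {y | P i y ≠ ⊤})
    (xstar : EuclideanSpace ℝ (Fin n))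
    (hxstar0 : P0 xstar ≠ ⊤) (hxstari : ∀ i, P i (A i xstar) ≠ ⊤)
    (ε : ℕ → ℝ) (hε : Tendsto ε atTop (𝓝 0))
    (lam : Fin m → ℕ → ℝ) (hlampos : ∀ i t, 0 < lam i t)
    (hlam : ∀ i, Tendsto (lam i) atTop (𝓝 0))
    (x y : ℕ → EuclideanSpace ℝ (Fin n))
    (hx : Tendsto x atTop (𝓝 xstar)) (hy : Tendsto y atTop (𝓝 xstar))
    (ξ : ℕ → EuclideanSpace ℝ (Fin n)) (hξ : ∀ t, ‖ξ t‖ ≤ ε t)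
    (η : ℕ → EuclideanSpace ℝ (Fin n)) (hη : ∀ t, η t ∈ limitingSubdiff P0 (y t))
    (ζ : (i : Fin m) → ℕ → EuclideanSpace ℝ (Fin (ni i)))
    (hζ : ∀ i t, ζ i t ∈ proxSet (P i) (lam i t) (A i (x t)))
    (heq : ∀ t, ξ t = gradient f (x t) + η t +
      ∑ i, (1 / lam i t) •
        (ContinuousLinearMap.adjoint (A i)) (A i (x t) - ζ i t))
    (hCQ : ∀ (y0 : EuclideanSpace ℝ (Fin n))
        (yi : (i : Fin m) → EuclideanSpace ℝ (Fin (ni i))),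
      y0 ∈ horizonSubdiff P0 xstar →
      (∀ i, yi i ∈ horizonSubdiff (P i) (A i xstar)) →
      y0 + ∑ i, (ContinuousLinearMap.adjoint (A i)) (yi i) = 0 →
      y0 = 0 ∧ ∀ i, yi i = 0) :
    ∃ η₀ ∈ limitingSubdiff P0 xstar,
      ∃ χ : (i : Fin m) → EuclideanSpace ℝ (Fin (ni i)),
        (∀ i, χ i ∈ limitingSubdiff (P i) (A i xstar)) ∧
        gradient f xstar + η₀ +
          ∑ i, (ContinuousLinearMap.adjoint (A i)) (χ i) = 0 := by
  obtain ⟨p, v, H0, hvη⟩ :=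
    exists_isAttentiveFrechetSeq_of_mem_limitingSubdiff (hP0cont xstar hxstar0) hy hη
  have Hi : ∀ i, IsAttentiveFrechetSeq (P i) (A i xstar) (ζ i)
      (fun t => (1 / lam i t) • (A i (x t) - ζ i t)) := fun i =>
    isAttentiveFrechetSeq_of_mem_proxSet (hPnn i) (hPcont i _ (hxstari i)) (hxstari i)
      (hlampos i) (hlam i) (((A i).continuous.tendsto xstar).comp hx) (hζ i)
  have hsum : ∀ t, v t + ∑ i, ContinuousLinearMap.adjoint (A i)
      ((1 / lam i t) • (A i (x t) - ζ i t)) = (v t - η t) + ξ t - gradient f (x t) := by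
    intro t
    simp only [map_smul, heq t]
    abel
  have hg : Tendsto (fun t => v t + ∑ i, ContinuousLinearMap.adjoint (A i)
      ((1 / lam i t) • (A i (x t) - ζ i t))) atTop (𝓝 (-gradient f xstar)) := by
    simp_rw [hsum]
    simpa using (hvη.add (squeeze_zero_norm hξ hε)).sub
      ((hf.continuous_gradient.tendsto xstar).comp hx)
  obtain ⟨η₀, hη₀, χ, hχ, hχsum⟩ :=
    exists_limitingSubdiff_of_tendsto_adjointSum hCQ hxstar0 hxstari H0 Hi hg
  exact ⟨η₀, hη₀, χ, hχ, by rw [add_assoc, hχsum, add_neg_cancel]⟩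

/-- Convergence of SDCAM to a stationary point: under approximate stationarity
of the iterates and the constraint qualification, the limit `x*` satisfies
`0 ∈ ∇f(x*) + ∂P_0(x*) + Σ_i A_i^* ∂P_i(A_i x*)`. -/
theorem sdcam_accumulation_stationary {n m : ℕ} {ni : Fin m → ℕ}
    (f : EuclideanSpace ℝ (Fin n) → ℝ) (hf : ContDiff ℝ 1 f)
    (P0 : EuclideanSpace ℝ (Fin n) → EReal)
    (hP0nn : ∀ x, 0 ≤ P0 x) (hP0proper : ∃ x, P0 x ≠ ⊤)
    (hP0closed : LowerSemicontinuous P0)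
    (hP0cont : ContinuousOn P0 {x | P0 x ≠ ⊤})
    (A : (i : Fin m) → EuclideanSpace ℝ (Fin n) →L[ℝ] EuclideanSpace ℝ (Fin (ni i)))
    (P : (i : Fin m) → EuclideanSpace ℝ (Fin (ni i)) → EReal)
    (hPnn : ∀ i y, 0 ≤ P i y) (hPproper : ∀ i, ∃ y, P i y ≠ ⊤)
    (hPclosed : ∀ i, LowerSemicontinuous (P i))
    (hPdom : ∀ i, IsClosed {y | P i y ≠ ⊤})
    (hPcont : ∀ i, ContinuousOn (P i) {y | P i y ≠ ⊤})
    (xstar : EuclideanSpace ℝ (Fin n))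
    (hxstar0 : P0 xstar ≠ ⊤) (hxstari : ∀ i, P i (A i xstar) ≠ ⊤)
    (ε : ℕ → ℝ) (hεpos : ∀ t, 0 < ε t) (hε : Tendsto ε atTop (𝓝 0))
    (lam : Fin m → ℕ → ℝ) (hlampos : ∀ i t, 0 < lam i t)
    (hlam : ∀ i, Tendsto (lam i) atTop (𝓝 0))
    (x y : ℕ → EuclideanSpace ℝ (Fin n))
    (hx : Tendsto x atTop (𝓝 xstar)) (hy : Tendsto y atTop (𝓝 xstar))
    (ξ : ℕ → EuclideanSpace ℝ (Fin n)) (hξ : ∀ t, ‖ξ t‖ ≤ ε t)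
    (η : ℕ → EuclideanSpace ℝ (Fin n)) (hη : ∀ t, η t ∈ limitingSubdiff P0 (y t))
    (ζ : (i : Fin m) → ℕ → EuclideanSpace ℝ (Fin (ni i)))
    (hζ : ∀ i t, ζ i t ∈ proxSet (P i) (lam i t) (A i (x t)))
    (heq : ∀ t, ξ t = gradient f (x t) + η t +
      ∑ i, (1 / lam i t) •
        (ContinuousLinearMap.adjoint (A i)) (A i (x t) - ζ i t))
    (hCQ : ∀ (y0 : EuclideanSpace ℝ (Fin n))
        (yi : (i : Fin m) → EuclideanSpace ℝ (Fin (ni i))),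
      y0 ∈ horizonSubdiff P0 xstar →
      (∀ i, yi i ∈ horizonSubdiff (P i) (A i xstar)) →
      y0 + ∑ i, (ContinuousLinearMap.adjoint (A i)) (yi i) = 0 →
      y0 = 0 ∧ ∀ i, yi i = 0) :
    ∃ η₀ ∈ limitingSubdiff P0 xstar,
      ∃ χ : (i : Fin m) → EuclideanSpace ℝ (Fin (ni i)),
        (∀ i, χ i ∈ limitingSubdiff (P i) (A i xstar)) ∧
        gradient f xstar + η₀ +
          ∑ i, (ContinuousLinearMap.adjoint (A i)) (χ i) = 0 :=
  sdcam_accumulation_stationary_general f hf P0 hP0cont A P hPnn hPcont xstar hxstar0 hxstari ε hε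
    lam hlampos hlam x y hx hy ξ hξ η hη ζ hζ heq hCQ
end

section
/- Let h : ℝ^n → ℝ be differentiable with L_h-Lipschitz gradient (L_h > 0), let g : ℝ^n → ℝ be convex, let P : ℝ^n → ℝ ∪ {∞} be proper closed with inf P > −∞, and set F := h + P − g. Fix x̄ ∈ dom P, a convex subgradient ζ ∈ ∂g(x̄), and L > 0, and let u be any global minimizer over ℝ^n of x ↦ ⟨∇h(x̄) − ζ, x − x̄⟩ + (L/2)‖x − x̄‖² + P(x). Then F(u) ≤ F(x̄) + ((L_h − L)/2)‖u − x̄‖². -/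
/-!
The descent lemma bounds `h u` by the quadratic model of `h` at `x̄` with curvature `L_h`.
Testing the minimality of `u` against the competitor `x̄` bounds the model of curvature `L`
plus `P u` by `P x̄`, and the subgradient inequality bounds `-g u` by `-g x̄ - ⟪ζ, u - x̄⟫`.
Adding the three, the linear terms cancel. Since `P x̄` is finite, minimality also forces
`P u` to be finite, so the whole argument takes place in `ℝ`.
-/

open scoped NNReal RealInnerProductSpace

section LipschitzGradient

variable {E : Type*} [NormedAddCommGroup E] [InnerProductSpace ℝ E]

theorem HasGradientAt.hasDerivAt_comp_add_smul [CompleteSpace E] {f : E → ℝ} {f' x v : E} {t : ℝ}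
    (hf : HasGradientAt f f' (x + t • v)) :
    HasDerivAt (fun s : ℝ => f (x + s • v)) ⟪f', v⟫ t := by
  have hline : HasDerivAt (fun s : ℝ => x + s • v) v t := by
    simpa using ((hasDerivAt_id t).smul_const v).const_add x
  exact hf.hasFDerivAt.comp_hasDerivAt t hline

theorem LipschitzWith.inner_sub_le_mul_sq {f' : E → E} {K : ℝ≥0} (hK : LipschitzWith K f')
    (x v : E) {t : ℝ} (ht : 0 ≤ t) :
    ⟪f' (x + t • v) - f' x, v⟫ ≤ K * t * ‖v‖ ^ 2 := by
  have hdist : ‖f' (x + t • v) - f' x‖ ≤ K * (t * ‖v‖) := by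
    simpa [dist_eq_norm, norm_smul, abs_of_nonneg ht] using hK.dist_le_mul (x + t • v) x
  calc ⟪f' (x + t • v) - f' x, v⟫ ≤ ‖f' (x + t • v) - f' x‖ * ‖v‖ := real_inner_le_norm _ _
    _ ≤ K * (t * ‖v‖) * ‖v‖ := by gcongr
    _ = K * t * ‖v‖ ^ 2 := by ring

theorem le_add_inner_add_sq_of_lipschitzWith_gradient [CompleteSpace E] {f : E → ℝ}
    {f' : E → E} {K : ℝ≥0} (hf : ∀ x, HasGradientAt f (f' x) x) (hK : LipschitzWith K f')
    (x y : E) :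
    f y ≤ f x + ⟪f' x, y - x⟫ + K / 2 * ‖y - x‖ ^ 2 := by
  set v := y - x
  let φ : ℝ → ℝ := fun t => f (x + t • v) - t * ⟪f' x, v⟫ - t ^ 2 * (K / 2) * ‖v‖ ^ 2
  have hφ : ∀ t, HasDerivAt φ (⟪f' (x + t • v), v⟫ - ⟪f' x, v⟫ - t * K * ‖v‖ ^ 2) t := by
    intro t
    have hcomp : HasDerivAt (fun s : ℝ => f (x + s • v)) ⟪f' (x + t • v), v⟫ t :=
      (hf _).hasDerivAt_comp_add_smul
    have hlin := (hasDerivAt_id t).mul_const ⟪f' x, v⟫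
    have hquad := ((hasDerivAt_pow 2 t).mul_const ((K : ℝ) / 2)).mul_const (‖v‖ ^ 2)
    exact ((hcomp.sub hlin).sub hquad).congr_deriv (by push_cast; ring)
  have hanti : AntitoneOn φ (Set.Ici 0) := by
    have hcont : Continuous φ := continuous_iff_continuousAt.2 fun t => (hφ t).continuousAt
    refine antitoneOn_of_hasDerivWithinAt_nonpos (convex_Ici 0) hcont.continuousOn
      (fun t _ => (hφ t).hasDerivWithinAt) fun t ht => ?_
    rw [interior_Ici] at ht
    have hlip := hK.inner_sub_le_mul_sq x v ht.le
    rw [inner_sub_left] at hlip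
    linarith
  have hφ_one_le_zero := hanti (Set.mem_Ici.2 le_rfl) (Set.mem_Ici.2 zero_le_one) zero_le_one
  simp only [φ, v, one_smul, zero_smul, add_zero, add_sub_cancel, one_pow, one_mul,
    zero_mul, sub_zero, ne_eq, OfNat.ofNat_ne_zero, not_false_eq_true, zero_pow] at hφ_one_le_zero
  linarith

end LipschitzGradient

theorem npg_major_descent_general {n : ℕ}
    (h : EuclideanSpace ℝ (Fin n) → ℝ) (h' : EuclideanSpace ℝ (Fin n) → EuclideanSpace ℝ (Fin n))
    (Lh : ℝ) (hLh : 0 < Lh)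
    (hgrad : ∀ x, HasGradientAt h (h' x) x)
    (hlip : LipschitzWith (Real.toNNReal Lh) h')
    (g : EuclideanSpace ℝ (Fin n) → ℝ)
    (P : EuclideanSpace ℝ (Fin n) → EReal)
    (hPbot : ∀ x, P x ≠ ⊥)
    (xbar : EuclideanSpace ℝ (Fin n)) (hxbar : P xbar ≠ ⊤)
    (ζ : EuclideanSpace ℝ (Fin n))
    (hζ : ∀ y, g xbar + inner ℝ ζ (y - xbar) ≤ g y)
    (L : ℝ)
    (u : EuclideanSpace ℝ (Fin n))
    (hu : ∀ x, ((inner ℝ (h' xbar - ζ) (u - xbar) + (L / 2) * ‖u - xbar‖ ^ 2 : ℝ) : EReal) + P u ≤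
      ((inner ℝ (h' xbar - ζ) (x - xbar) + (L / 2) * ‖x - xbar‖ ^ 2 : ℝ) : EReal) + P x) :
    (h u : EReal) + P u - (g u : ℝ) ≤
      (h xbar : EReal) + P xbar - (g xbar : ℝ) +
        (((Lh - L) / 2 * ‖u - xbar‖ ^ 2 : ℝ) : EReal) := by
  have hmin :
      ((⟪h' xbar - ζ, u - xbar⟫ + L / 2 * ‖u - xbar‖ ^ 2 : ℝ) : EReal) + P u ≤ P xbar := by
    convert hu xbar using 1
    simp
  lift P xbar to ℝ using ⟨hxbar, hPbot xbar⟩ with px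
  have hPu : P u ≠ ⊤ := fun htop => EReal.coe_ne_top px <| top_le_iff.1 <| by
    rwa [htop, EReal.coe_add_top] at hmin
  lift P u to ℝ using ⟨hPu, hPbot u⟩ with pu
  have hdesc := le_add_inner_add_sq_of_lipschitzWith_gradient hgrad hlip xbar u
  rw [Real.coe_toNNReal _ hLh.le] at hdesc
  have hsubgrad := hζ u
  rw [inner_sub_left] at hmin
  norm_cast at hmin ⊢
  linarith

/-- Descent property of one majorized proximal gradient step.  Let `h` be
differentiable with `L_h`-Lipschitz gradient, `g` convex, `P` proper closed
bounded below, `F = h + P − g`.  For `x̄ ∈ dom P`, `ζ ∈ ∂g(x̄)`, `L > 0`, any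
global minimizer `u` of `x ↦ ⟨∇h(x̄) − ζ, x − x̄⟩ + (L/2)‖x − x̄‖² + P(x)`
satisfies `F(u) ≤ F(x̄) + ((L_h − L)/2)‖u − x̄‖²`. -/
theorem npg_major_descent {n : ℕ}
    (h : EuclideanSpace ℝ (Fin n) → ℝ) (h' : EuclideanSpace ℝ (Fin n) → EuclideanSpace ℝ (Fin n))
    (Lh : ℝ) (hLh : 0 < Lh)
    (hgrad : ∀ x, HasGradientAt h (h' x) x)
    (hlip : LipschitzWith (Real.toNNReal Lh) h')
    (g : EuclideanSpace ℝ (Fin n) → ℝ) (hg : ConvexOn ℝ Set.univ g)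
    (P : EuclideanSpace ℝ (Fin n) → EReal)
    (hPproper : ∃ x, P x ≠ ⊤) (hPbot : ∀ x, P x ≠ ⊥)
    (hPclosed : LowerSemicontinuous P)
    (hPbdd : ∃ b : ℝ, ∀ x, (b : EReal) ≤ P x)
    (xbar : EuclideanSpace ℝ (Fin n)) (hxbar : P xbar ≠ ⊤)
    (ζ : EuclideanSpace ℝ (Fin n))
    (hζ : ∀ y, g xbar + inner ℝ ζ (y - xbar) ≤ g y)
    (L : ℝ) (hL : 0 < L)
    (u : EuclideanSpace ℝ (Fin n))
    (hu : ∀ x, ((inner ℝ (h' xbar - ζ) (u - xbar) + (L / 2) * ‖u - xbar‖ ^ 2 : ℝ) : EReal) + P u ≤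
      ((inner ℝ (h' xbar - ζ) (x - xbar) + (L / 2) * ‖x - xbar‖ ^ 2 : ℝ) : EReal) + P x) :
    (h u : EReal) + P u - (g u : ℝ) ≤
      (h xbar : EReal) + P xbar - (g xbar : ℝ) +
        (((Lh - L) / 2 * ‖u - xbar‖ ^ 2 : ℝ) : EReal) :=
  npg_major_descent_general h h' Lh hLh hgrad hlip g P hPbot xbar hxbar ζ hζ L u hu
end

section
/- Let n ≥ k ≥ 1 be integers and τ > 0, and let Ω := { x ∈ ℝ^n : at most k coordinates of x are nonzero, and 0 ≤ x_i ≤ τ for all i }. Given y ∈ ℝ^n, let I ⊆ {1,…,n} be any index set of cardinality k such that y_i ≥ y_j whenever i ∈ I and j ∉ I, and define z ∈ ℝ^n by z_i = max{min{y_i, τ}, 0} for i ∈ I and z_i = 0 for i ∉ I. Then z ∈ Ω and ‖z − y‖ ≤ ‖x − y‖ for every x ∈ Ω; that is, z is a Euclidean projection of y onto Ω. -/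
open Filter Topology

lemma clamp_opt (τ a t : ℝ) (h0 : 0 ≤ t) (h1 : t ≤ τ) :
    (max (min a τ) 0 - a) ^ 2 ≤ (t - a) ^ 2 := by
  rw [max_def, min_def]
  split_ifs <;> nlinarith

lemma d_mono (τ a b : ℝ) (hτ : 0 < τ) (hab : a ≤ b) :
    a ^ 2 - (max (min a τ) 0 - a) ^ 2 ≤ b ^ 2 - (max (min b τ) 0 - b) ^ 2 := by
  rw [max_def, min_def, max_def, min_def]
  split_ifs <;> nlinarith

lemma sum_le_sum_card {α : Type*} [DecidableEq α] (A B : Finset α) (f : α → ℝ)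
    (hcard : A.card ≤ B.card) (hf : ∀ b ∈ B, 0 ≤ f b)
    (hle : ∀ a ∈ A, ∀ b ∈ B, f a ≤ f b) :
    ∑ a ∈ A, f a ≤ ∑ b ∈ B, f b := by
  rcases A.eq_empty_or_nonempty with rfl | hA
  · simpa using Finset.sum_nonneg hf
  have hB : B.Nonempty := Finset.card_pos.mp (lt_of_lt_of_le (Finset.card_pos.mpr hA) hcard)
  obtain ⟨b₀, hb₀, hmin⟩ := B.exists_min_image f hB
  calc ∑ a ∈ A, f a ≤ ∑ _a ∈ A, f b₀ := Finset.sum_le_sum fun a ha => hle a ha b₀ hb₀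
    _ = (A.card : ℝ) * f b₀ := by simp [Finset.sum_const, nsmul_eq_mul]
    _ ≤ (B.card : ℝ) * f b₀ :=
        mul_le_mul_of_nonneg_right (by exact_mod_cast hcard) (hf b₀ hb₀)
    _ ≤ ∑ b ∈ B, f b := by
        have := Finset.card_nsmul_le_sum B f (f b₀) fun b hb => hmin b hb
        simpa [nsmul_eq_mul] using this

/-- Projection onto the sparse box
`Ω = { x ∈ ℝ^n : at most k coordinates of x are nonzero, 0 ≤ x_i ≤ τ }`:
given `y`, pick an index set `I` of cardinality `k` containing `k` largest
entries of `y`, and set `z_i = max{min{y_i, τ}, 0}` on `I` and `z_i = 0`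
elsewhere.  Then `z` is a Euclidean projection of `y` onto `Ω`. -/
theorem proj_sparse_box {n k : ℕ} (hk1 : 1 ≤ k) (hkn : k ≤ n) (τ : ℝ) (hτ : 0 < τ)
    (y : EuclideanSpace ℝ (Fin n)) (I : Finset (Fin n)) (hI : I.card = k)
    (hIord : ∀ i ∈ I, ∀ j ∉ I, y j ≤ y i)
    (z : EuclideanSpace ℝ (Fin n))
    (hz : ∀ i, z i = if i ∈ I then max (min (y i) τ) 0 else 0) :
    (({i | z i ≠ 0} : Set (Fin n)).ncard ≤ k ∧ ∀ i, 0 ≤ z i ∧ z i ≤ τ) ∧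
    ∀ x : EuclideanSpace ℝ (Fin n),
      (({i | x i ≠ 0} : Set (Fin n)).ncard ≤ k ∧ ∀ i, 0 ≤ x i ∧ x i ≤ τ) →
      ‖z - y‖ ≤ ‖x - y‖ := by
  classical
  set d : Fin n → ℝ := fun i => (y i) ^ 2 - (max (min (y i) τ) 0 - y i) ^ 2 with hd
  have hdnn : ∀ i, 0 ≤ d i := by
    intro i
    have := clamp_opt τ (y i) 0 le_rfl hτ.le
    simp only [hd]
    nlinarith
  constructor
  · constructor
    · have hsub : ({i | z i ≠ 0} : Set (Fin n)) ⊆ (I : Set (Fin n)) := by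
        intro i hi
        by_contra h
        exact hi (by rw [hz i, if_neg (by simpa using h)])
      calc ({i | z i ≠ 0} : Set (Fin n)).ncard ≤ (I : Set (Fin n)).ncard :=
            Set.ncard_le_ncard hsub (Set.toFinite _)
        _ = k := by rw [Set.ncard_coe_finset, hI]
    · intro i
      rw [hz i]
      split_ifs
      · exact ⟨le_max_right _ _, max_le (min_le_right _ _) hτ.le⟩
      · exact ⟨le_rfl, hτ.le⟩
  · rintro x ⟨hxcard, hxbox⟩
    set S : Finset (Fin n) := Finset.univ.filter (fun i => x i ≠ 0) with hS
    have hScard : S.card ≤ k := by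
      have : ({i | x i ≠ 0} : Set (Fin n)).ncard = S.card := by
        rw [hS, ← Set.toFinset_setOf]
        exact Set.ncard_eq_toFinset_card' _
      omega
    -- per-coordinate identities/inequalities
    have h1 : ∀ i, (z i - y i) ^ 2 = (y i) ^ 2 - (if i ∈ I then d i else 0) := by
      intro i
      rw [hz i]
      split_ifs with h
      · simp only [hd]; ring
      · ring
    have h2 : ∀ i, (y i) ^ 2 - (if i ∈ S then d i else 0) ≤ (x i - y i) ^ 2 := by
      intro i
      split_ifs with h
      · have := clamp_opt τ (y i) (x i) (hxbox i).1 (hxbox i).2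
        simp only [hd]
        linarith
      · have hx0 : x i = 0 := by
          by_contra hne
          exact h (by simp [hS, hne])
        rw [hx0]
        nlinarith [sq_nonneg (y i)]
    -- comparing the savings sums
    have hSI : ∑ i ∈ S, d i ≤ ∑ i ∈ I, d i := by
      have e1 : ∑ i ∈ S ∩ I, d i + ∑ i ∈ S \ I, d i = ∑ i ∈ S, d i :=
        Finset.sum_inter_add_sum_sdiff S I d
      have e2 : ∑ i ∈ I ∩ S, d i + ∑ i ∈ I \ S, d i = ∑ i ∈ I, d i :=
        Finset.sum_inter_add_sum_sdiff I S d
      have c1 := Finset.card_inter_add_card_sdiff S I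
      have c2 := Finset.card_inter_add_card_sdiff I S
      have hic : (S ∩ I).card = (I ∩ S).card := by rw [Finset.inter_comm]
      have hc : (S \ I).card ≤ (I \ S).card := by omega
      have hdiff : ∑ i ∈ S \ I, d i ≤ ∑ i ∈ I \ S, d i := by
        refine sum_le_sum_card _ _ d hc (fun b _ => hdnn b) fun a ha b hb => ?_
        exact d_mono τ (y a) (y b) hτ
          (hIord b (Finset.mem_sdiff.mp hb).1 a (Finset.mem_sdiff.mp ha).2)
      have hie : ∑ i ∈ S ∩ I, d i = ∑ i ∈ I ∩ S, d i := by rw [Finset.inter_comm]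
      linarith
    have hsum : ∑ i, (z i - y i) ^ 2 ≤ ∑ i, (x i - y i) ^ 2 := by
      have hz' : ∑ i, (z i - y i) ^ 2 = ∑ i, (y i) ^ 2 - ∑ i ∈ I, d i := by
        rw [Finset.sum_congr rfl fun i _ => h1 i, Finset.sum_sub_distrib]
        congr 1
        simp [Finset.sum_ite_mem]
      have hx' : ∑ i, (y i) ^ 2 - ∑ i ∈ S, d i ≤ ∑ i, (x i - y i) ^ 2 := by
        have := Finset.sum_le_sum fun i (_ : i ∈ Finset.univ) => h2 i
        rw [Finset.sum_sub_distrib] at this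
        simpa [Finset.sum_ite_mem] using this
      linarith
    rw [EuclideanSpace.norm_eq, EuclideanSpace.norm_eq]
    apply Real.sqrt_le_sqrt
    simpa [Real.norm_eq_abs, sq_abs] using hsum
end

section
/- Let f : ℝ^n → ℝ be continuously differentiable, P_0 : ℝ^n → [0, ∞] proper closed, and for i = 1,…,m let A_i : ℝ^n → ℝ^{n_i} be linear with adjoint A_i^* and P_i : ℝ^{n_i} → [0, ∞] proper closed; fix λ_i > 0. Suppose {x^l}_{l ≥ 0} ⊂ ℝ^n satisfies ‖x^{l+1} − x^l‖ → 0, the positive reals {β_l} are bounded, and for every l the point x^{l+1} is a global minimizer of x ↦ ⟨∇f(x^l) + Σ_{i=1}^m (1/λ_i) A_i^*(A_i x^l − ζ_i^l), x⟩ + (β_l/2)‖x − x^l‖² + P_0(x), where ζ_i^l ∈ prox_{λ_i P_i}(A_i x^l) for each i. Then for every ε > 0 there exists an index l such that dist(0, ∇f(x^l) + ∂P_0(x^{l+1}) + Σ_{i=1}^m (1/λ_i) A_i^*(A_i x^l − ζ_i^l)) ≤ ε and ‖x^{l+1} − x^l‖ ≤ ε, where ∂P_0 denotes the limiting subdifferential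 and the distance is taken to the Minkowski sum of the set ∂P_0(x^{l+1}) translated by the indicated vectors. -/
open Filter Topology
open scoped ENNReal NNReal

theorem EReal.add_coe_sub_le_of_coe_add_le {a b : ℝ} {x y : EReal}
    (h : (a : EReal) + x ≤ b + y) : x + ((a - b : ℝ) : EReal) ≤ y := by
  induction x using EReal.rec <;> induction y using EReal.rec <;> simp_all
  · norm_cast at h ⊢; linarith
  · norm_cast at h; exact absurd h (EReal.coe_ne_top _)

section Subdifferential

variable {d : ℕ} {h : EuclideanSpace ℝ (Fin d) → EReal} {w u : EuclideanSpace ℝ (Fin d)}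
  {c : ℝ}

theorem neg_mul_norm_le_frechet_quotient {y : EuclideanSpace ℝ (Fin d)}
    (hw_top : h w ≠ ⊤) (hw_bot : h w ≠ ⊥)
    (hle : h w + ((inner ℝ u (y - w) - c * ‖y - w‖ ^ 2 : ℝ) : EReal) ≤ h y) (hy : y ≠ w) :
    ((-c * ‖y - w‖ : ℝ) : EReal) ≤
      (h y - h w - ((inner ℝ u (y - w) : ℝ) : EReal)) / ((‖y - w‖ : ℝ) : EReal) := by
  have hnorm : 0 < ‖y - w‖ := norm_pos_iff.2 (sub_ne_zero.2 hy)
  lift h w to ℝ using ⟨hw_top, hw_bot⟩ with a ha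
  induction hy' : h y using EReal.rec with
  | bot => rw [hy', ← EReal.coe_add, le_bot_iff] at hle; exact absurd hle (EReal.coe_ne_bot _)
  | top =>
    rw [EReal.top_sub_coe, EReal.top_sub_coe,
      EReal.top_div_of_pos_ne_top (mod_cast hnorm) (EReal.coe_ne_top _)]
    exact le_top
  | coe b =>
    rw [hy'] at hle
    norm_cast at hle ⊢
    rw [← EReal.coe_div, EReal.coe_le_coe_iff, le_div_iff₀ hnorm]
    nlinarith

theorem mem_frechetSubdiff_of_quadratic_minorant (hw_top : h w ≠ ⊤) (hw_bot : h w ≠ ⊥)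
    (hle : ∀ y, h w + ((inner ℝ u (y - w) - c * ‖y - w‖ ^ 2 : ℝ) : EReal) ≤ h y) :
    u ∈ frechetSubdiff h w := by
  refine ⟨hw_top, ?_⟩
  rcases (𝓝[≠] w).eq_or_neBot with hbot | hne
  · rw [hbot, liminf_bot]; exact le_top
  have hlim : Tendsto (fun y => ((-c * ‖y - w‖ : ℝ) : EReal)) (𝓝[≠] w) (𝓝 0) := by
    have hcont : Continuous fun y : EuclideanSpace ℝ (Fin d) => -c * ‖y - w‖ := by fun_prop
    have : Tendsto (fun y => -c * ‖y - w‖) (𝓝 w) (𝓝 0) := by simpa using hcont.tendsto w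
    simpa using (EReal.tendsto_coe.2 this).mono_left nhdsWithin_le_nhds
  rw [← hlim.liminf_eq]
  refine liminf_le_liminf ?_ isBounded_ge_of_bot isCobounded_ge_of_top
  filter_upwards [self_mem_nhdsWithin] with y hy
  exact neg_mul_norm_le_frechet_quotient hw_top hw_bot (hle y) hy

theorem neg_sub_smul_mem_frechetSubdiff_of_minimizer {v z : EuclideanSpace ℝ (Fin d)} {β : ℝ}
    (hproper : ∃ y, h y ≠ ⊤) (hw_bot : h w ≠ ⊥)
    (hmin : ∀ y, ((inner ℝ v w + (β / 2) * ‖w - z‖ ^ 2 : ℝ) : EReal) + h w ≤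
      ((inner ℝ v y + (β / 2) * ‖y - z‖ ^ 2 : ℝ) : EReal) + h y) :
    -v - β • (w - z) ∈ frechetSubdiff h w := by
  have hw_top : h w ≠ ⊤ := by
    obtain ⟨y, hy⟩ := hproper
    intro htop
    have := hmin y
    rw [htop, EReal.coe_add_top, top_le_iff] at this
    exact (EReal.add_lt_top (EReal.coe_ne_top _) hy).ne this
  refine mem_frechetSubdiff_of_quadratic_minorant (c := β / 2) hw_top hw_bot fun y => ?_
  have hexpand : inner ℝ (-v - β • (w - z)) (y - w) - β / 2 * ‖y - w‖ ^ 2 =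
      (inner ℝ v w + β / 2 * ‖w - z‖ ^ 2) - (inner ℝ v y + β / 2 * ‖y - z‖ ^ 2) := by
    rw [show y - z = (y - w) + (w - z) by abel, norm_add_sq_real, inner_sub_left, inner_neg_left,
      real_inner_smul_left, inner_sub_right, real_inner_comm (w - z)]
    ring
  rw [hexpand]
  exact EReal.add_coe_sub_le_of_coe_add_le (hmin y)

theorem frechetSubdiff_subset_limitingSubdiff :
    frechetSubdiff h w ⊆ limitingSubdiff h w := fun u hu =>
  ⟨hu.1, fun _ => w, fun _ => u, tendsto_const_nhds, tendsto_const_nhds, tendsto_const_nhds,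
    fun _ => hu⟩

end Subdifferential

theorem inner_stopping_criterion_general {n : ℕ}
    (P0 : EuclideanSpace ℝ (Fin n) → EReal)
    (hP0nn : ∀ x, 0 ≤ P0 x) (hP0proper : ∃ x, P0 x ≠ ⊤)
    (x : ℕ → EuclideanSpace ℝ (Fin n))
    (hstep : Tendsto (fun l => ‖x (l + 1) - x l‖) atTop (𝓝 0))
    (β : ℕ → ℝ) (hβpos : ∀ l, 0 < β l) (hβbdd : ∃ B : ℝ, ∀ l, β l ≤ B)
    (v : ℕ → EuclideanSpace ℝ (Fin n))
    (hmin : ∀ l, ∀ w : EuclideanSpace ℝ (Fin n),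
      ((inner ℝ (v l) (x (l + 1)) + (β l / 2) * ‖x (l + 1) - x l‖ ^ 2 : ℝ) : EReal)
          + P0 (x (l + 1)) ≤
      ((inner ℝ (v l) w + (β l / 2) * ‖w - x l‖ ^ 2 : ℝ) : EReal) + P0 w) :
    ∀ ε : ℝ, 0 < ε → ∃ l,
      (⨅ η ∈ limitingSubdiff P0 (x (l + 1)), (‖η + v l‖₊ : ℝ≥0∞)) ≤
        ENNReal.ofReal ε ∧
      ‖x (l + 1) - x l‖ ≤ ε := by
  intro ε hε
  obtain ⟨B, hB⟩ := hβbdd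
  have hresid : Tendsto (fun l => β l * ‖x (l + 1) - x l‖) atTop (𝓝 0) :=
    squeeze_zero (fun l => by have := hβpos l; positivity)
      (fun l => mul_le_mul_of_nonneg_right (hB l) (norm_nonneg _))
      (by simpa using hstep.const_mul B)
  obtain ⟨l, hl_resid, hl_step⟩ :=
    ((hresid.eventually (ge_mem_nhds hε)).and (hstep.eventually (ge_mem_nhds hε))).exists
  refine ⟨l, ?_, hl_step⟩
  have hsub : -v l - β l • (x (l + 1) - x l) ∈ limitingSubdiff P0 (x (l + 1)) :=
    frechetSubdiff_subset_limitingSubdiff <| neg_sub_smul_mem_frechetSubdiff_of_minimizer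
      hP0proper (ne_bot_of_le_ne_bot EReal.zero_ne_bot (hP0nn _)) (hmin l)
  calc (⨅ η ∈ limitingSubdiff P0 (x (l + 1)), (‖η + v l‖₊ : ℝ≥0∞))
      ≤ ‖-v l - β l • (x (l + 1) - x l) + v l‖₊ := biInf_le _ hsub
    _ = ENNReal.ofReal (β l * ‖x (l + 1) - x l‖) := by
      rw [show -v l - β l • (x (l + 1) - x l) + v l = -(β l • (x (l + 1) - x l)) by abel,
        ← enorm_eq_nnnorm, ← ofReal_norm, norm_neg, norm_smul, Real.norm_of_nonneg (hβpos l).le]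
    _ ≤ ENNReal.ofReal ε := ENNReal.ofReal_le_ofReal hl_resid

/-- Finite termination of the inner stopping criterion: along the inner
NPG-with-majorization iterates, for every `ε > 0` there is an index `l` with
`dist(0, ∇f(x^l) + ∂P_0(x^{l+1}) + Σ_i (1/λ_i) A_i^*(A_i x^l − ζ_i^l)) ≤ ε`
and `‖x^{l+1} − x^l‖ ≤ ε`. -/
theorem inner_stopping_criterion {n m : ℕ} {ni : Fin m → ℕ}
    (f : EuclideanSpace ℝ (Fin n) → ℝ) (hf : ContDiff ℝ 1 f)
    (P0 : EuclideanSpace ℝ (Fin n) → EReal)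
    (hP0nn : ∀ x, 0 ≤ P0 x) (hP0proper : ∃ x, P0 x ≠ ⊤)
    (hP0closed : LowerSemicontinuous P0)
    (A : (i : Fin m) → EuclideanSpace ℝ (Fin n) →L[ℝ] EuclideanSpace ℝ (Fin (ni i)))
    (P : (i : Fin m) → EuclideanSpace ℝ (Fin (ni i)) → EReal)
    (hPnn : ∀ i y, 0 ≤ P i y) (hPproper : ∀ i, ∃ y, P i y ≠ ⊤)
    (hPclosed : ∀ i, LowerSemicontinuous (P i))
    (lam : Fin m → ℝ) (hlampos : ∀ i, 0 < lam i)
    (x : ℕ → EuclideanSpace ℝ (Fin n))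
    (hstep : Tendsto (fun l => ‖x (l + 1) - x l‖) atTop (𝓝 0))
    (β : ℕ → ℝ) (hβpos : ∀ l, 0 < β l) (hβbdd : ∃ B : ℝ, ∀ l, β l ≤ B)
    (ζ : (i : Fin m) → ℕ → EuclideanSpace ℝ (Fin (ni i)))
    (hζ : ∀ i l, ζ i l ∈ proxSet (P i) (lam i) (A i (x l)))
    (v : ℕ → EuclideanSpace ℝ (Fin n))
    (hv : ∀ l, v l = gradient f (x l) +
      ∑ i, (1 / lam i) • (ContinuousLinearMap.adjoint (A i)) (A i (x l) - ζ i l))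
    (hmin : ∀ l, ∀ w : EuclideanSpace ℝ (Fin n),
      ((inner ℝ (v l) (x (l + 1)) + (β l / 2) * ‖x (l + 1) - x l‖ ^ 2 : ℝ) : EReal)
          + P0 (x (l + 1)) ≤
      ((inner ℝ (v l) w + (β l / 2) * ‖w - x l‖ ^ 2 : ℝ) : EReal) + P0 w) :
    ∀ ε : ℝ, 0 < ε → ∃ l,
      (⨅ η ∈ limitingSubdiff P0 (x (l + 1)), (‖η + v l‖₊ : ℝ≥0∞)) ≤
        ENNReal.ofReal ε ∧
      ‖x (l + 1) - x l‖ ≤ ε :=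
  inner_stopping_criterion_general P0 hP0nn hP0proper x hstep β hβpos hβbdd v hmin
end
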